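/- Let G be a simple graph on vertices x_1, ..., x_N with independence number d, let K be a field, and let I(G) ⊆ R = K[x_1,...,x_N] be its edge ideal. For 1 ≤ k ≤ d, let F_k = Σ x_{i_1}···x_{i_k}, the sum over all independent sets of G of cardinality k. Then the radical of the ideal I(G) + ⟨F_1, ..., F_d⟩ of R equals the maximal ideal ⟨x_1, ..., x_N⟩; equivalently, the images of F_1, ..., F_d form a homogeneous system of parameters for R/I(G). -/

import Mathlib

set_option synthInstance.maxHeartbeats 1000000

open MvPolynomial

/-- The edge ideal of a simple graph. -/
noncomputable def edgeIdeal (K : Type*) [Field K] {V : Type*} (G : SimpleGraph V) :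
    Ideal (MvPolynomial V K) :=
  Ideal.span {p | ∃ u v : V, G.Adj u v ∧ p = X u * X v}

/-- `F_k`: the sum of the squarefree monomials `x_{i₁} ⋯ x_{i_k}` over all
independent sets `{x_{i₁}, …, x_{i_k}}` of `G` of cardinality `k`. -/
noncomputable def indepSum (K : Type*) [Field K] {V : Type*} [Fintype V] [DecidableEq V]
    (G : SimpleGraph V) [DecidableRel G.Adj] (k : ℕ) : MvPolynomial V K :=
  ∑ S ∈ Finset.univ.filter
      (fun S : Finset V => S.card = k ∧ ∀ u ∈ S, ∀ v ∈ S, ¬ G.Adj u v),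
    ∏ v ∈ S, X v

/-!
Write `x^S = ∏_{v ∈ S} x_v` and `J = I(G) + ⟨F₁, …, F_d⟩`. As `J` lies in the prime ideal
`⟨x₁, …, x_N⟩`, so does `√J`. Conversely, `x^S ∈ √J` for every nonempty independent set `S`, by
downward induction on `S`: with `k = |S|`, `x^S F_k = (x^S)² + ∑_{T ≠ S} x^S x^T`, and
`x^S x^T = x^{S ∪ T} x^{S ∩ T}` lies in `I(G)` if `S ∪ T` contains an edge, and in `√J` by
induction otherwise, since then `S ∪ T` is an independent proper superset of `S`.
Hence `(x^S)² ∈ √J`; the case `S = {v}` gives `x_v ∈ √J`.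
-/

namespace MvPolynomial

variable {σ R : Type*}

lemma idealOfVars_eq_ker_constantCoeff [CommSemiring R] :
    idealOfVars σ R = RingHom.ker (constantCoeff : MvPolynomial σ R →+* R) := by
  ext p
  rw [idealOfVars, ← Set.image_univ, mem_ideal_span_X_image, RingHom.mem_ker, constantCoeff_eq]
  constructor
  · intro h
    by_contra h0
    obtain ⟨i, -, hi⟩ := h 0 (mem_support_iff.mpr h0)
    exact hi rfl
  · intro h m hm
    obtain ⟨i, hi⟩ := Finsupp.ne_iff.mp (ne_of_mem_of_not_mem hm (by simpa using h))
    exact ⟨i, Set.mem_univ i, hi⟩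

lemma isPrime_idealOfVars [CommRing R] [IsDomain R] : (idealOfVars σ R).IsPrime := by
  rw [idealOfVars_eq_ker_constantCoeff]
  exact RingHom.ker_isPrime _

lemma prod_X_mem_idealOfVars [CommSemiring R] {S : Finset σ} (hS : S.Nonempty) :
    ∏ v ∈ S, X v ∈ idealOfVars σ R := by
  obtain ⟨a, ha⟩ := hS
  exact Ideal.mem_of_dvd _ (Finset.dvd_prod_of_mem X ha) (Ideal.subset_span ⟨a, rfl⟩)

end MvPolynomial

section EdgeIdeal

variable {K : Type*} [Field K] {V : Type*} {G : SimpleGraph V}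

lemma edgeIdeal_le_idealOfVars : edgeIdeal K G ≤ idealOfVars V K := by
  rw [edgeIdeal, Ideal.span_le]
  rintro p ⟨u, v, -, rfl⟩
  exact Ideal.mul_mem_right _ _ (Ideal.subset_span ⟨u, rfl⟩)

lemma prod_X_mem_edgeIdeal {S : Finset V} {u v : V} (hu : u ∈ S) (hv : v ∈ S)
    (huv : G.Adj u v) : ∏ w ∈ S, X w ∈ edgeIdeal K G := by
  classical
  have hdvd : X u * X v ∣ ∏ w ∈ S, (X w : MvPolynomial V K) := by
    rw [← Finset.prod_pair (G.ne_of_adj huv)]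
    exact Finset.prod_dvd_prod_of_subset _ _ _ (Finset.insert_subset hu (by simpa using hv))
  exact Ideal.mem_of_dvd _ hdvd (Ideal.subset_span ⟨u, v, huv, rfl⟩)

lemma prod_X_mul_prod_X_mem_radical [DecidableEq V] {J : Ideal (MvPolynomial V K)}
    (hE : edgeIdeal K G ≤ J) {S T : Finset V} (hTS : ¬ T ⊆ S)
    (ih : ∀ U, S ⊂ U → (∀ u ∈ U, ∀ v ∈ U, ¬ G.Adj u v) → ∏ v ∈ U, X v ∈ J.radical) :
    (∏ v ∈ S, X v) * ∏ v ∈ T, X v ∈ J.radical := by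
  rw [← Finset.prod_union_inter]
  by_cases hU : ∀ u ∈ S ∪ T, ∀ v ∈ S ∪ T, ¬ G.Adj u v
  · exact Ideal.mul_mem_right _ _ (ih _ (left_lt_sup.mpr hTS) hU)
  · push Not at hU
    obtain ⟨u, hu, v, hv, huv⟩ := hU
    exact Ideal.mul_mem_right _ _ (J.le_radical (hE (prod_X_mem_edgeIdeal hu hv huv)))

variable [Fintype V] [DecidableEq V] [DecidableRel G.Adj]

lemma indepSum_mem_idealOfVars {k : ℕ} (hk : k ≠ 0) : indepSum K G k ∈ idealOfVars V K := by
  refine Ideal.sum_mem _ fun S hS => prod_X_mem_idealOfVars (Finset.card_ne_zero.mp ?_)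
  rw [(Finset.mem_filter.mp hS).2.1]
  exact hk

lemma prod_X_mem_radical_of_forall_ssuperset {J : Ideal (MvPolynomial V K)}
    (hE : edgeIdeal K G ≤ J) {S : Finset V} (hS : ∀ u ∈ S, ∀ v ∈ S, ¬ G.Adj u v)
    (hF : indepSum K G S.card ∈ J)
    (ih : ∀ U, S ⊂ U → (∀ u ∈ U, ∀ v ∈ U, ¬ G.Adj u v) → ∏ v ∈ U, X v ∈ J.radical) :
    ∏ v ∈ S, X v ∈ J.radical := by
  set Φ := Finset.univ.filter
    (fun T : Finset V => T.card = S.card ∧ ∀ u ∈ T, ∀ v ∈ T, ¬ G.Adj u v)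
  have hSΦ : S ∈ Φ := Finset.mem_filter.mpr ⟨Finset.mem_univ S, rfl, hS⟩
  have hcross : ∑ T ∈ Φ.erase S, (∏ v ∈ S, X v) * ∏ v ∈ T, X v ∈ J.radical := by
    refine Ideal.sum_mem _ fun T hT => prod_X_mul_prod_X_mem_radical hE (fun hTS => ?_) ih
    obtain ⟨hTS', hTΦ⟩ := Finset.mem_erase.mp hT
    exact hTS' (Finset.eq_of_subset_of_card_le hTS (Finset.mem_filter.mp hTΦ).2.1.ge)
  have hsq : (∏ v ∈ S, X v) * ∏ v ∈ S, X v ∈ J.radical := by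
    have h : (∏ v ∈ S, X v) * indepSum K G S.card ∈ J.radical :=
      J.le_radical (J.mul_mem_left _ hF)
    rw [indepSum, Finset.mul_sum, ← Finset.add_sum_erase _ _ hSΦ] at h
    exact (Ideal.add_mem_iff_left _ hcross).mp h
  exact Ideal.mem_radical_of_pow_mem (m := 2) (by rwa [sq])

lemma prod_X_mem_radical {J : Ideal (MvPolynomial V K)} {d : ℕ} (hE : edgeIdeal K G ≤ J)
    (hF : ∀ k, k ≠ 0 → k ≤ d → indepSum K G k ∈ J)
    (hd : ∀ S : Finset V, (∀ u ∈ S, ∀ v ∈ S, ¬ G.Adj u v) → S.card ≤ d)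
    {S : Finset V} (hS : ∀ u ∈ S, ∀ v ∈ S, ¬ G.Adj u v) (hne : S.Nonempty) :
    ∏ v ∈ S, X v ∈ J.radical := by
  refine Finset.strongDownwardInductionOn (n := d)
    (p := fun S => (∀ u ∈ S, ∀ v ∈ S, ¬ G.Adj u v) → S.Nonempty → ∏ v ∈ S, X v ∈ J.radical)
    S (fun S ih hcard hS hne => ?_) (hd S hS) hS hne
  exact prod_X_mem_radical_of_forall_ssuperset hE hS (hF _ hne.card_pos.ne' hcard)
    fun U hSU hU => ih (hd U hU) hSU hU (hne.mono hSU.subset)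

end EdgeIdeal

/-- If `d` is the independence number of `G`, then the radical of
`I(G) + ⟨F₁, …, F_d⟩` is the maximal ideal `⟨x₁, …, x_N⟩`; i.e. the images of
`F₁, …, F_d` form a homogeneous system of parameters for `K[x]/I(G)`. -/
theorem radical_edgeIdeal_sup_span_indepSum (K : Type*) [Field K] {V : Type*}
    [Fintype V] [DecidableEq V] (G : SimpleGraph V) [DecidableRel G.Adj] (d : ℕ)
    (hd : IsGreatest {k : ℕ | ∃ S : Finset V,
      (∀ u ∈ S, ∀ v ∈ S, ¬ G.Adj u v) ∧ S.card = k} d) :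
    (edgeIdeal K G +
        Ideal.span (Set.range fun j : Fin d => indepSum K G ((j : ℕ) + 1))).radical =
      Ideal.span (Set.range (MvPolynomial.X : V → MvPolynomial V K)) := by
  generalize hJ : edgeIdeal K G + _ = J
  have hF : ∀ k, k ≠ 0 → k ≤ d → indepSum K G k ∈ J := fun k hk hkd =>
    hJ ▸ Ideal.mem_sup_right (Ideal.subset_span
      ⟨⟨k - 1, by omega⟩, congrArg _ (Nat.sub_add_cancel (Nat.one_le_iff_ne_zero.mpr hk))⟩)
  apply le_antisymm
  · calc J.radical ≤ (idealOfVars V K).radical := by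
          refine Ideal.radical_mono (hJ ▸ sup_le edgeIdeal_le_idealOfVars (Ideal.span_le.mpr ?_))
          exact Set.range_subset_iff.mpr fun j => indepSum_mem_idealOfVars (Nat.succ_ne_zero j)
      _ = _ := isPrime_idealOfVars.radical
  · refine Ideal.span_le.mpr (Set.range_subset_iff.mpr fun v => ?_)
    simpa using prod_X_mem_radical (hJ ▸ le_sup_left) hF (fun S hS => hd.2 ⟨S, hS, rfl⟩)
      (S := {v}) (by simp) (Finset.singleton_nonempty v)
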